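/- arXiv:1810.00624 — 2 statements merged into one kernel-verified Lean document; each statement's English description precedes it below -/
import Mathlib

section
/- Let G be a finite simple graph with minimum degree at least 3 and let C be an edge 2-coloring of G. Among all characteristic subgraphs of G with respect to C that are disjoint unions of paths (maximum degree at most 2 and acyclic), let χ be one with the maximum number of connected components. Suppose uv is an edge of χ of color a that lies in a connected component of χ containing at least two edges. Then G has no edge of color a both of whose endpoints have degree 0 in χ. -/
open SimpleGraph

/-- `C` is an edge 2-coloring of `G`: for every vertex, the edges incident to it
carry at most 2 distinct colors. -/
def IsEdge2Coloring {V : Type*} (G : SimpleGraph V) (C : Sym2 V → ℕ) : Prop :=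
  ∀ v : V, (C '' G.incidenceSet v).ncard ≤ 2

/-- The number of distinct colors used by a coloring `C` on the edges of `G`. -/
noncomputable def numColors {V : Type*} (G : SimpleGraph V) (C : Sym2 V → ℕ) : ℕ :=
  (C '' G.edgeSet).ncard

/-- `OPT G`: the maximum number of colors used by an edge 2-coloring of `G`. -/
noncomputable def OPT {V : Type*} (G : SimpleGraph V) : ℕ :=
  sSup {n : ℕ | ∃ C : Sym2 V → ℕ, IsEdge2Coloring G C ∧ numColors G C = n}

/-- `M` is a matching of `G`, given as a set of edges: the edges belong to `G` and
are pairwise vertex-disjoint. -/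
def IsMatchingSet {V : Type*} (G : SimpleGraph V) (M : Set (Sym2 V)) : Prop :=
  M ⊆ G.edgeSet ∧ ∀ e ∈ M, ∀ f ∈ M, e ≠ f → ∀ v : V, v ∈ e → v ∉ f

/-- `ALG G M`: number of colors produced by the matching based algorithm, i.e.
`|M|` plus the number of connected components of `G − M`. -/
noncomputable def ALG {V : Type*} (G : SimpleGraph V) (M : Set (Sym2 V)) : ℕ :=
  M.ncard + Nat.card (G.deleteEdges M).ConnectedComponent

/-- `H` is a characteristic subgraph of `G` with respect to the coloring `C`:
a subgraph of `G` containing exactly one edge of each color used by `C`. -/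
def IsCharSubgraph {V : Type*} (G : SimpleGraph V) (C : Sym2 V → ℕ)
    (H : SimpleGraph V) : Prop :=
  H ≤ G ∧ ∀ c ∈ C '' G.edgeSet, ∃! e, e ∈ H.edgeSet ∧ C e = c

/-- Number of connected components of `H` containing at least one edge
(the "characteristic paths" when `H` is a union of paths). -/
noncomputable def numEdgeComponents {V : Type*} (H : SimpleGraph V) : ℕ :=
  Nat.card {c : H.ConnectedComponent // ∃ a b : V, H.Adj a b ∧ H.connectedComponentMk a = c}


/-! Swap the edge `uv` for `xy`. The result is again a characteristic subgraph (`xy` takes over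
the color `a`), and since `x`, `y` are isolated it still has maximum degree at most 2 and no
cycle. Deleting `uv` loses no component, because the component of `uv` keeps another edge, while
`xy` forms a new component of its own: this contradicts the maximality of `χ`. -/

namespace SimpleGraph

variable {V : Type*}

theorem IsIsolated.eq_of_reachable {G : SimpleGraph V} {x y : V} (hx : G.IsIsolated x)
    (h : G.Reachable x y) : x = y := by
  obtain ⟨w⟩ := h
  cases w with
  | nil => rfl
  | cons hadj _ => exact absurd hadj (hx _)

theorem IsIsolated.anti {G G' : SimpleGraph V} {x : V} (hx : G'.IsIsolated x) (h : G ≤ G') :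
    G.IsIsolated x :=
  fun z hz => hx z (h hz)

theorem Reachable.of_sup_edge {K : SimpleGraph V} {x y p q : V} (hx : K.IsIsolated x)
    (hy : K.IsIsolated y) (hp : ¬K.IsIsolated p) (h : (K ⊔ edge x y).Reachable p q) :
    K.Reachable p q := by
  obtain ⟨w⟩ := h
  induction w with
  | nil => rfl
  | cons hadj _ ih =>
    have hK : K.Adj _ _ := hadj.resolve_right fun he => by
      rcases (edge_adj ..).1 he with ⟨⟨rfl, -⟩ | ⟨rfl, -⟩, -⟩
      exacts [hp hx, hp hy]
    exact hK.reachable.trans (ih hK.not_isIsolated_right)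

theorem ncard_neighborSet_sup_edge_le [Finite V] {K : SimpleGraph V} {x y : V} {n : ℕ}
    (hn : 1 ≤ n) (hx : K.IsIsolated x) (hy : K.IsIsolated y)
    (hK : ∀ z, (K.neighborSet z).ncard ≤ n) (z : V) :
    ((K ⊔ edge x y).neighborSet z).ncard ≤ n := by
  rw [neighborSet_sup]
  by_cases hz : K.IsIsolated z
  · have hedge : ((edge x y).neighborSet z).ncard ≤ 1 :=
      (Set.ncard_le_one (Set.toFinite _)).2 fun a ha b hb => by
        simp only [mem_neighborSet, edge_adj] at ha hb
        grind
    rw [hz.neighborSet_eq_empty, Set.empty_union]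
    exact hedge.trans hn
  · have hedge : (edge x y).neighborSet z = ∅ := by
      ext w
      simp only [mem_neighborSet, edge_adj, Set.mem_empty_iff_false, iff_false]
      rintro ⟨⟨rfl, -⟩ | ⟨rfl, -⟩, -⟩
      exacts [hz hx, hz hy]
    rw [hedge, Set.union_empty]
    exact hK z

abbrev EdgeComponent (H : SimpleGraph V) : Type _ :=
  {c : H.ConnectedComponent // ∃ a b : V, H.Adj a b ∧ H.connectedComponentMk a = c}

def EdgeComponent.ofLE {K H : SimpleGraph V} (h : K ≤ H) : K.EdgeComponent → H.EdgeComponent :=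
  fun c => ⟨c.1.map (Hom.ofLE h), by
    obtain ⟨_, a, b, hab, rfl⟩ := c
    exact ⟨a, b, h hab, rfl⟩⟩

theorem numEdgeComponents_le_of_le [Finite V] {K H : SimpleGraph V} (hKH : K ≤ H)
    (h : ∀ p q, H.Adj p q → ∃ p' q', K.Adj p' q' ∧ H.Reachable p p') :
    numEdgeComponents H ≤ numEdgeComponents K := by
  refine Nat.card_le_card_of_surjective (EdgeComponent.ofLE hKH) ?_
  rintro ⟨_, p, q, hpq, rfl⟩
  obtain ⟨p', q', hK, hr⟩ := h p q hpq
  exact ⟨⟨_, p', q', hK, rfl⟩, Subtype.ext (ConnectedComponent.sound hr.symm)⟩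

theorem numEdgeComponents_le_deleteEdges [Finite V] {H : SimpleGraph V} {u v : V}
    (huv : H.Adj u v) (htwo : ∃ w x : V, H.Adj w x ∧ s(w, x) ≠ s(u, v) ∧ H.Reachable u w) :
    numEdgeComponents H ≤ numEdgeComponents (H.deleteEdges {s(u, v)}) := by
  refine numEdgeComponents_le_of_le (deleteEdges_le _) fun p q hpq => ?_
  by_cases he : s(p, q) = s(u, v)
  · obtain ⟨w, x, hwx, hne, hr⟩ := htwo
    have hpu : H.Reachable p u := by
      rcases Sym2.eq_iff.1 he with ⟨rfl, -⟩ | ⟨rfl, -⟩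
      exacts [.rfl, huv.symm.reachable]
    exact ⟨w, x, (deleteEdges_adj ..).2 ⟨hwx, hne⟩, hpu.trans hr⟩
  · exact ⟨p, q, (deleteEdges_adj ..).2 ⟨hpq, he⟩, .rfl⟩

theorem numEdgeComponents_lt_sup_edge [Finite V] {K : SimpleGraph V} {x y : V} (hne : x ≠ y)
    (hx : K.IsIsolated x) (hy : K.IsIsolated y) :
    numEdgeComponents K < numEdgeComponents (K ⊔ edge x y) := by
  have hxy : (K ⊔ edge x y).Adj x y := .inr ((edge_adj ..).2 ⟨.inl ⟨rfl, rfl⟩, hne⟩)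
  have hreach {p q r : V} (hpq : K.Adj p q) (h : (K ⊔ edge x y).Reachable p r) :
      K.Reachable p r :=
    h.of_sup_edge hx hy hpq.not_isIsolated_left
  have hinj : Function.Injective (EdgeComponent.ofLE (le_sup_left : K ≤ K ⊔ edge x y)) := by
    intro ⟨c, p, q, hpq, hc⟩ ⟨c', p', q', _, hc'⟩ h
    subst hc hc'
    exact Subtype.ext (ConnectedComponent.sound
      (hreach hpq (ConnectedComponent.exact (congrArg Subtype.val h))))
  have hmiss : ⟨_, x, y, hxy, rfl⟩ ∉ Set.range (EdgeComponent.ofLE le_sup_left) := by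
    rintro ⟨⟨_, p, q, hpq, rfl⟩, h⟩
    have hpx := hreach hpq (ConnectedComponent.exact (congrArg Subtype.val h))
    exact hpq.not_isIsolated_left (hx.eq_of_reachable hpx.symm ▸ hx)
  let _ := Fintype.ofFinite K.EdgeComponent
  let _ := Fintype.ofFinite (K ⊔ edge x y).EdgeComponent
  simpa only [numEdgeComponents, Nat.card_eq_fintype_card] using
    Fintype.card_lt_of_injective_of_notMem _ hinj hmiss

end SimpleGraph

theorem IsCharSubgraph.deleteEdges_sup_edge {V : Type*} {G H : SimpleGraph V} {C : Sym2 V → ℕ}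
    {u v x y : V} (hH : IsCharSubgraph G C H) (huv : H.Adj u v) (hxy : G.Adj x y)
    (hc : C s(x, y) = C s(u, v)) :
    IsCharSubgraph G C (H.deleteEdges {s(u, v)} ⊔ edge x y) := by
  have hmem (f : Sym2 V) : f ∈ (H.deleteEdges {s(u, v)} ⊔ edge x y).edgeSet ↔
      (f ∈ H.edgeSet ∧ f ≠ s(u, v)) ∨ f = s(x, y) := by
    simp [edgeSet_edge_of_ne hxy.ne, or_comm]
  refine ⟨sup_le ((deleteEdges_le _).trans hH.1) ((edge_le_iff _).2 (.inr hxy)),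
    fun c hc' => ?_⟩
  obtain ⟨e, ⟨he, rfl⟩, huniq⟩ := hH.2 c hc'
  by_cases hce : C e = C s(u, v)
  · have heuv : e = s(u, v) := (huniq _ ⟨huv, hce.symm⟩).symm
    refine ⟨s(x, y), ⟨(hmem _).2 (.inr rfl), hc.trans hce.symm⟩, fun f ⟨hf, hfc⟩ => ?_⟩
    rcases (hmem f).1 hf with ⟨hfH, hfne⟩ | rfl
    · exact absurd ((huniq f ⟨hfH, hfc⟩).trans heuv) hfne
    · rfl
  · refine ⟨e, ⟨(hmem e).2 (.inl ⟨he, fun h => hce (h ▸ rfl)⟩), rfl⟩,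
      fun f ⟨hf, hfc⟩ => ?_⟩
    rcases (hmem f).1 hf with ⟨hfH, -⟩ | rfl
    · exact huniq f ⟨hfH, hfc⟩
    · exact absurd (hfc.symm.trans hc) hce

theorem no_color_edge_between_isolated_general {V : Type*} [Fintype V] (G : SimpleGraph V)
    (C : Sym2 V → ℕ)
    (H : SimpleGraph V) (hH : IsCharSubgraph G C H)
    (hdeg : ∀ v : V, (H.neighborSet v).ncard ≤ 2) (hacyc : H.IsAcyclic)
    (hmaxpaths : ∀ H' : SimpleGraph V, IsCharSubgraph G C H' →
      (∀ v : V, (H'.neighborSet v).ncard ≤ 2) → H'.IsAcyclic →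
      numEdgeComponents H' ≤ numEdgeComponents H)
    (u v : V) (a : ℕ) (huv : H.Adj u v) (hcol : C s(u, v) = a)
    (htwo : ∃ w x : V, H.Adj w x ∧ s(w, x) ≠ s(u, v) ∧ H.Reachable u w) :
    ¬ ∃ x y : V, G.Adj x y ∧ C s(x, y) = a ∧
      (H.neighborSet x).ncard = 0 ∧ (H.neighborSet y).ncard = 0 := by
  rintro ⟨x, y, hxy, hxya, hx, hy⟩
  set K := H.deleteEdges {s(u, v)}
  have hKH : K ≤ H := deleteEdges_le _
  have hKx : K.IsIsolated x :=
    ((neighborSet_eq_empty H).1 ((Set.ncard_eq_zero (Set.toFinite _)).1 hx)).anti hKH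
  have hKy : K.IsIsolated y :=
    ((neighborSet_eq_empty H).1 ((Set.ncard_eq_zero (Set.toFinite _)).1 hy)).anti hKH
  have hchar := hH.deleteEdges_sup_edge huv hxy (hxya.trans hcol.symm)
  have hdeg' := ncard_neighborSet_sup_edge_le one_le_two hKx hKy
    fun z => (Set.ncard_le_ncard (neighborSet_mono hKH z)).trans (hdeg z)
  have hacyc' := (hacyc.anti hKH).sup_edge_of_not_reachable
    fun h => hxy.ne (hKx.eq_of_reachable h)
  exact (hmaxpaths _ hchar hdeg' hacyc').not_gt
    ((numEdgeComponents_le_deleteEdges huv htwo).trans_lt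
      (numEdgeComponents_lt_sup_edge hxy.ne hKx hKy))

/-- Claim (a): if `χ` is a path-union characteristic subgraph with the maximum number of
paths and `uv` is an edge of `χ` of color `a` lying on a path with at least two edges, then
no `a`-colored edge of `G` joins two vertices of degree 0 in `χ`. -/
theorem no_color_edge_between_isolated {V : Type*} [Fintype V] (G : SimpleGraph V)
    (hδ : ∀ v : V, 3 ≤ (G.neighborSet v).ncard)
    (C : Sym2 V → ℕ) (hC : IsEdge2Coloring G C)
    (H : SimpleGraph V) (hH : IsCharSubgraph G C H)
    (hdeg : ∀ v : V, (H.neighborSet v).ncard ≤ 2) (hacyc : H.IsAcyclic)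
    (hmaxpaths : ∀ H' : SimpleGraph V, IsCharSubgraph G C H' →
      (∀ v : V, (H'.neighborSet v).ncard ≤ 2) → H'.IsAcyclic →
      numEdgeComponents H' ≤ numEdgeComponents H)
    (u v : V) (a : ℕ) (huv : H.Adj u v) (hcol : C s(u, v) = a)
    (htwo : ∃ w x : V, H.Adj w x ∧ s(w, x) ≠ s(u, v) ∧ H.Reachable u w) :
    ¬ ∃ x y : V, G.Adj x y ∧ C s(x, y) = a ∧
      (H.neighborSet x).ncard = 0 ∧ (H.neighborSet y).ncard = 0 :=
  no_color_edge_between_isolated_general G C H hH hdeg hacyc hmaxpaths u v a huv hcol htwo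
end

section
/- Let G be a finite simple graph with minimum degree at least 3 and let C be an edge 2-coloring of G. Among all characteristic subgraphs of G with respect to C that are disjoint unions of paths (maximum degree at most 2 and acyclic), let χ be one with the maximum number of connected components. Suppose uv is an edge of χ of color a such that u has degree 2 in χ. Then there is no vertex w of degree 0 in χ such that uw and vw are both edges of G colored a. -/
open SimpleGraph

theorem aux_reach_map {V : Type*} {A B : SimpleGraph V} (g : V → V)
    (h : ∀ x y, A.Adj x y → B.Adj (g x) (g y) ∨ g x = g y) :
    ∀ {x y : V}, A.Reachable x y → B.Reachable (g x) (g y) := by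
  intro x y hr
  obtain ⟨p⟩ := hr
  induction p with
  | nil => exact Reachable.refl _
  | cons hadj p ih =>
      rcases h _ _ hadj with h' | h'
      · exact (h'.reachable).trans ih
      · rw [h']; exact ih

theorem aux_isolated {V : Type*} {A : SimpleGraph V} {x y : V}
    (h : ∀ z, ¬A.Adj x z) (hr : A.Reachable x y) : x = y := by
  obtain ⟨p⟩ := hr
  cases p with
  | nil => rfl
  | cons hadj _ => exact absurd hadj (h _)

theorem aux_card_lt {α β : Type*} [Finite β] (f : β → α) (hs : Function.Surjective f)
    (hni : ¬ Function.Injective f) : Nat.card α < Nat.card β := by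
  have h1 : Nat.card α ≤ Nat.card β := Nat.card_le_card_of_surjective f hs
  rcases h1.lt_or_eq with h | h
  · exact h
  · exact absurd ((Nat.bijective_iff_surjective_and_card f).mpr ⟨hs, h.symm⟩).1 hni

/-- Claim (b): if `χ` is a path-union characteristic subgraph with the maximum number of
paths and `uv` is an edge of `χ` of color `a` with `u` of degree 2 in `χ`, then there is no
`a`-colored triangle formed by `uv` and a vertex of degree 0 in `χ`. -/
theorem no_color_triangle_with_isolated {V : Type*} [Fintype V] (G : SimpleGraph V)
    (hδ : ∀ v : V, 3 ≤ (G.neighborSet v).ncard)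
    (C : Sym2 V → ℕ) (hC : IsEdge2Coloring G C)
    (H : SimpleGraph V) (hH : IsCharSubgraph G C H)
    (hdeg : ∀ v : V, (H.neighborSet v).ncard ≤ 2) (hacyc : H.IsAcyclic)
    (hmaxpaths : ∀ H' : SimpleGraph V, IsCharSubgraph G C H' →
      (∀ v : V, (H'.neighborSet v).ncard ≤ 2) → H'.IsAcyclic →
      numEdgeComponents H' ≤ numEdgeComponents H)
    (u v : V) (a : ℕ) (huv : H.Adj u v) (hcol : C s(u, v) = a)
    (hu2 : (H.neighborSet u).ncard = 2) :
    ¬ ∃ w : V, (H.neighborSet w).ncard = 0 ∧ G.Adj u w ∧ G.Adj v w ∧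
      C s(u, w) = a ∧ C s(v, w) = a := by
  rintro ⟨w, hw0, hGuw, hGvw, hcuw, hcvw⟩
  classical
  have huw : u ≠ w := hGuw.ne
  have hvw : v ≠ w := hGvw.ne
  have hunv : u ≠ v := huv.ne
  -- w is isolated in H
  have hwiso : ∀ z, ¬ H.Adj w z := by
    rw [Set.ncard_eq_zero (Set.toFinite _)] at hw0
    intro z hz
    exact Set.eq_empty_iff_forall_notMem.mp hw0 z hz
  have hxw_ne : ∀ {x y : V}, H.Adj x y → x ≠ w := by
    intro x y hxy h; subst h; exact hwiso y hxy
  -- sym2 helpers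
  have hsvw : ∀ {x y : V}, s(x, y) = s(v, w) → (x = v ∧ y = w) ∨ (x = w ∧ y = v) := by
    intro x y h; rwa [Sym2.eq_iff] at h
  have hsuv : ∀ {x y : V}, s(x, y) = s(u, v) → (x = u ∧ y = v) ∨ (x = v ∧ y = u) := by
    intro x y h; rwa [Sym2.eq_iff] at h
  -- the modified graph
  set H' : SimpleGraph V := (H \ fromEdgeSet {s(u, v)}) ⊔ fromEdgeSet {s(v, w)} with hH'def
  have hH'adj : ∀ x y : V, H'.Adj x y ↔ (H.Adj x y ∧ s(x, y) ≠ s(u, v)) ∨ s(x, y) = s(v, w) := by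
    intro x y
    simp only [hH'def, sup_adj, sdiff_adj, fromEdgeSet_adj, Set.mem_singleton_iff]
    constructor
    · rintro (⟨h1, h2⟩ | ⟨h1, _⟩)
      · exact Or.inl ⟨h1, fun hc => h2 ⟨hc, h1.ne⟩⟩
      · exact Or.inr h1
    · rintro (⟨h1, h2⟩ | h1)
      · exact Or.inl ⟨h1, fun hc => h2 hc.1⟩
      · refine Or.inr ⟨h1, ?_⟩
        rintro rfl
        rcases hsvw h1 with ⟨rfl, rfl⟩ | ⟨rfl, rfl⟩ <;> exact hvw rfl
  have hEmem : ∀ e : Sym2 V, e ∈ H'.edgeSet ↔ (e ∈ H.edgeSet ∧ e ≠ s(u, v)) ∨ e = s(v, w) := by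
    intro e
    refine Sym2.ind (fun x y => ?_) e
    rw [mem_edgeSet, hH'adj, mem_edgeSet]
  -- the unique edge of color a in H is s(u,v)
  have huniq : ∀ e ∈ H.edgeSet, C e = a → e = s(u, v) := by
    obtain ⟨e₀, _, hun⟩ := hH.2 a ⟨s(u, v), (mem_edgeSet _).mpr (hH.1 huv), hcol⟩
    intro e he hce
    rw [hun e ⟨he, hce⟩, hun s(u, v) ⟨(mem_edgeSet _).mpr huv, hcol⟩]
  -- H' is a characteristic subgraph
  have hchar : IsCharSubgraph G C H' := by
    constructor
    · intro x y hxy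
      rcases (hH'adj x y).mp hxy with ⟨h1, _⟩ | h1
      · exact hH.1 h1
      · rcases hsvw h1 with ⟨rfl, rfl⟩ | ⟨rfl, rfl⟩
        · exact hGvw
        · exact hGvw.symm
    · intro c hc
      by_cases hca : c = a
      · subst hca
        refine ⟨s(v, w), ⟨(hEmem _).mpr (Or.inr rfl), hcvw⟩, ?_⟩
        rintro e ⟨he, hce⟩
        rcases (hEmem e).mp he with ⟨he1, he2⟩ | he1
        · exact absurd (huniq e he1 hce) he2
        · exact he1
      · obtain ⟨e₀, ⟨he₀, hce₀⟩, hun⟩ := hH.2 c hc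
        have he₀uv : e₀ ≠ s(u, v) := by
          intro h; rw [h] at hce₀; rw [← hce₀] at hca; exact hca hcol
        refine ⟨e₀, ⟨(hEmem _).mpr (Or.inl ⟨he₀, he₀uv⟩), hce₀⟩, ?_⟩
        rintro e ⟨he, hce⟩
        rcases (hEmem e).mp he with ⟨he1, _⟩ | he1
        · exact hun e ⟨he1, hce⟩
        · subst he1; exact absurd (hce.symm.trans hcvw) hca
  -- degree bound for H'
  have hdeg' : ∀ x : V, (H'.neighborSet x).ncard ≤ 2 := by
    intro x
    by_cases hxv : x = v
    · subst hxv
      have hsub : H'.neighborSet x ⊆ (H.neighborSet x \ {u}) ∪ {w} := by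
        intro y hy
        rcases (hH'adj x y).mp hy with ⟨h1, h2⟩ | h1
        · refine Or.inl ⟨h1, ?_⟩
          intro hyu
          rw [Set.mem_singleton_iff] at hyu
          subst hyu
          exact h2 (Sym2.eq_swap)
        · rcases hsvw h1 with ⟨hx1, hy1⟩ | ⟨hx1, _⟩
          · exact Or.inr hy1
          · exact absurd hx1 hvw
      calc (H'.neighborSet x).ncard ≤ ((H.neighborSet x \ {u}) ∪ {w}).ncard :=
            Set.ncard_le_ncard hsub (Set.toFinite _)
        _ ≤ (H.neighborSet x \ {u}).ncard + ({w} : Set V).ncard := Set.ncard_union_le _ _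
        _ = (H.neighborSet x).ncard - 1 + 1 := by
            rw [Set.ncard_diff_singleton_of_mem (by exact huv.symm),
              Set.ncard_singleton]
        _ ≤ 2 := by
            have h1 : (H.neighborSet x).ncard ≤ 2 := hdeg x
            have h2 : 0 < (H.neighborSet x).ncard := by
              rw [Set.ncard_pos (Set.toFinite _)]
              exact ⟨u, huv.symm⟩
            omega
    · by_cases hxw : x = w
      · subst hxw
        have hsub : H'.neighborSet x ⊆ {v} := by
          intro y hy
          rcases (hH'adj x y).mp hy with ⟨h1, _⟩ | h1
          · exact absurd h1 (hwiso y)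
          · rcases hsvw h1 with ⟨hx1, _⟩ | ⟨_, hy1⟩
            · exact absurd hx1.symm hvw
            · exact hy1
        calc (H'.neighborSet x).ncard ≤ ({v} : Set V).ncard :=
              Set.ncard_le_ncard hsub (Set.toFinite _)
          _ ≤ 2 := by rw [Set.ncard_singleton]; omega
      · have hsub : H'.neighborSet x ⊆ H.neighborSet x := by
          intro y hy
          rcases (hH'adj x y).mp hy with ⟨h1, _⟩ | h1
          · exact h1
          · rcases hsvw h1 with ⟨hx1, _⟩ | ⟨hx1, _⟩
            · exact absurd hx1 hxv
            · exact absurd hx1 hxw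
        exact le_trans (Set.ncard_le_ncard hsub (Set.toFinite _)) (hdeg x)
  -- collapsing map
  set g : V → V := fun x => if x = w then v else x with hgdef
  have hgw : g w = v := by simp [hgdef]
  have hgu : g u = u := by simp [hgdef, huw]
  have hgv : g v = v := by simp [hgdef, hvw]
  have hgne : ∀ {x : V}, x ≠ w → g x = x := by intro x h; simp [hgdef, h]
  have hghom : ∀ x y : V, H'.Adj x y → H.Adj (g x) (g y) ∨ g x = g y := by
    intro x y hxy
    rcases (hH'adj x y).mp hxy with ⟨h1, _⟩ | h1
    · rw [hgne (hxw_ne h1), hgne (hxw_ne h1.symm)]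
      exact Or.inl h1
    · rcases hsvw h1 with ⟨rfl, rfl⟩ | ⟨rfl, rfl⟩
      · rw [hgv, hgw]; exact Or.inr rfl
      · rw [hgv, hgw]; exact Or.inr rfl
  -- bridges of H
  have hbr : ∀ e ∈ H.edgeSet, H.IsBridge e := isAcyclic_iff_forall_edge_isBridge.mp hacyc
  have hKuv : ¬(H \ fromEdgeSet {s(u, v)}).Reachable u v :=
    (isBridge_iff.mp (hbr _ ((mem_edgeSet _).mpr huv)))
  -- u and v are not reachable in H'
  have hH'uv : ¬H'.Reachable u v := by
    intro hr
    have hghomK : ∀ x y : V, H'.Adj x y →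
        (H \ fromEdgeSet {s(u, v)}).Adj (g x) (g y) ∨ g x = g y := by
      intro x y hxy
      rcases (hH'adj x y).mp hxy with ⟨h1, h2⟩ | h1
      · rw [hgne (hxw_ne h1), hgne (hxw_ne h1.symm)]
        refine Or.inl (by rw [sdiff_adj, fromEdgeSet_adj]; exact ⟨h1, fun hm => h2 hm.1⟩)
      · rcases hsvw h1 with ⟨rfl, rfl⟩ | ⟨rfl, rfl⟩
        · rw [hgv, hgw]; exact Or.inr rfl
        · rw [hgv, hgw]; exact Or.inr rfl
    have := aux_reach_map g hghomK hr
    rw [hgu, hgv] at this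
    exact hKuv this
  -- H' is acyclic
  have hacyc' : H'.IsAcyclic := by
    rw [isAcyclic_iff_forall_edge_isBridge]
    intro e he
    revert he
    refine Sym2.ind (fun x y he => ?_) e
    have hxy : H'.Adj x y := (mem_edgeSet _).mp he
    rw [isBridge_iff]
    intro hr
    rcases (hH'adj x y).mp hxy with ⟨hA, hne⟩ | hs
    · have hbx : ¬(H \ fromEdgeSet {s(x, y)}).Reachable x y :=
        (isBridge_iff.mp (hbr _ ((mem_edgeSet _).mpr hA)))
      have hhom : ∀ p q : V, (H' \ fromEdgeSet {s(x, y)}).Adj p q →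
          (H \ fromEdgeSet {s(x, y)}).Adj (g p) (g q) ∨ g p = g q := by
        intro p q hpq
        rw [sdiff_adj] at hpq
        obtain ⟨hpq1, hpq2⟩ := hpq
        rcases (hH'adj p q).mp hpq1 with ⟨hApq, _⟩ | hspq
        · rw [hgne (hxw_ne hApq), hgne (hxw_ne hApq.symm)]
          exact Or.inl (by rw [sdiff_adj]; exact ⟨hApq, hpq2⟩)
        · rcases hsvw hspq with ⟨rfl, rfl⟩ | ⟨rfl, rfl⟩
          · rw [hgv, hgw]; exact Or.inr rfl
          · rw [hgv, hgw]; exact Or.inr rfl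
      have := aux_reach_map g hhom hr
      rw [hgne (hxw_ne hA), hgne (hxw_ne hA.symm)] at this
      exact hbx this
    · -- the new edge vw
      have hwiso' : ∀ z, ¬(H' \ fromEdgeSet {s(x, y)}).Adj w z := by
        intro z hz
        rw [sdiff_adj] at hz
        obtain ⟨hz1, hz2⟩ := hz
        rcases (hH'adj w z).mp hz1 with ⟨h1, _⟩ | h1
        · exact hwiso z h1
        · apply hz2
          rw [fromEdgeSet_adj]
          refine ⟨by rw [h1, ← hs]; rfl, ?_⟩
          rcases hsvw h1 with ⟨h2, _⟩ | ⟨_, h2⟩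
          · exact absurd h2.symm hvw
          · subst h2; exact Ne.symm hvw
      rcases hsvw hs with ⟨rfl, rfl⟩ | ⟨rfl, rfl⟩
      · exact (Ne.symm hvw) (aux_isolated hwiso' hr.symm)
      · exact (Ne.symm hvw) (aux_isolated hwiso' hr)
  -- second neighbor of u
  have hu' : ∃ u', H.Adj u u' ∧ u' ≠ v := by
    by_contra h
    push_neg at h
    have hsub : H.neighborSet u ⊆ {v} := by
      intro z hz; exact h z hz
    have := Set.ncard_le_ncard hsub (Set.toFinite _)
    rw [Set.ncard_singleton, hu2] at this
    omega
  obtain ⟨u', hu'adj, hu'v⟩ := hu'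
  have hadju' : H'.Adj u u' := by
    refine (hH'adj u u').mpr (Or.inl ⟨hu'adj, ?_⟩)
    intro hc
    rcases hsuv hc with ⟨_, h2⟩ | ⟨h1, _⟩
    · exact hu'v h2
    · exact hunv h1
  have hadjvw' : H'.Adj v w := (hH'adj v w).mpr (Or.inr rfl)
  -- the component map
  let ψ : H'.ConnectedComponent → H.ConnectedComponent :=
    Quot.lift (fun x => H.connectedComponentMk (g x))
      (fun p q hpq => ConnectedComponent.sound (aux_reach_map g hghom hpq))
  have hψmk : ∀ x : V, ψ (H'.connectedComponentMk x) = H.connectedComponentMk (g x) :=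
    fun _ => rfl
  have hψedge : ∀ c' : H'.ConnectedComponent,
      (∃ p q : V, H'.Adj p q ∧ H'.connectedComponentMk p = c') →
      ∃ p q : V, H.Adj p q ∧ H.connectedComponentMk p = ψ c' := by
    rintro c' ⟨p, q, hpq, rfl⟩
    rcases (hH'adj p q).mp hpq with ⟨hA, _⟩ | hs
    · refine ⟨p, q, hA, ?_⟩
      rw [hψmk, hgne (hxw_ne hA)]
    · have hgp : g p = v := by
        rcases hsvw hs with ⟨rfl, _⟩ | ⟨rfl, _⟩
        · exact hgv
        · exact hgw
      refine ⟨v, u, huv.symm, ?_⟩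
      rw [hψmk, hgp]
  let T := {c : H.ConnectedComponent // ∃ p q : V, H.Adj p q ∧ H.connectedComponentMk p = c}
  let T' := {c : H'.ConnectedComponent // ∃ p q : V, H'.Adj p q ∧ H'.connectedComponentMk p = c}
  let Ψ : T' → T := fun c => ⟨ψ c.1, hψedge c.1 c.2⟩
  have hsurj : Function.Surjective Ψ := by
    rintro ⟨c, x, y, hxy, rfl⟩
    by_cases hru : H.Reachable x u
    · refine ⟨⟨H'.connectedComponentMk u, ⟨u, u', hadju', rfl⟩⟩, ?_⟩
      apply Subtype.ext
      show ψ (H'.connectedComponentMk u) = H.connectedComponentMk x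
      rw [hψmk, hgu]
      exact ConnectedComponent.sound hru.symm
    · refine ⟨⟨H'.connectedComponentMk x, ⟨x, y, ?_, rfl⟩⟩, ?_⟩
      · refine (hH'adj x y).mpr (Or.inl ⟨hxy, ?_⟩)
        intro hc
        rcases hsuv hc with ⟨rfl, _⟩ | ⟨_, rfl⟩
        · exact hru (Reachable.refl _)
        · exact hru hxy.reachable
      · apply Subtype.ext
        show ψ (H'.connectedComponentMk x) = H.connectedComponentMk x
        rw [hψmk, hgne (hxw_ne hxy)]
  have hni : ¬Function.Injective Ψ := by
    intro hinj
    have h1 : Ψ ⟨H'.connectedComponentMk u, ⟨u, u', hadju', rfl⟩⟩ =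
        Ψ ⟨H'.connectedComponentMk v, ⟨v, w, hadjvw', rfl⟩⟩ := by
      apply Subtype.ext
      show ψ (H'.connectedComponentMk u) = ψ (H'.connectedComponentMk v)
      rw [hψmk, hψmk, hgu, hgv]
      exact ConnectedComponent.sound huv.reachable
    have h2 : (⟨H'.connectedComponentMk u, ⟨u, u', hadju', rfl⟩⟩ : T') =
        ⟨H'.connectedComponentMk v, ⟨v, w, hadjvw', rfl⟩⟩ := hinj h1
    rw [Subtype.mk.injEq] at h2
    exact hH'uv (ConnectedComponent.exact h2)
  have hlt : numEdgeComponents H < numEdgeComponents H' := aux_card_lt Ψ hsurj hni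
  exact absurd (hmaxpaths H' hchar hdeg' hacyc') (not_le.mpr hlt)
end
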